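/- arXiv:1512.00348 — 7 statements merged into one kernel-verified Lean document; each statement's English description precedes it below -/
import Mathlib

section
/- Let (X,d) be a metric space, R a binary relation on X, and T : X → X. Suppose: (a) every R-preserving Cauchy sequence in X converges (R-completeness); (b) R is T-closed and locally T-transitive; (c) T is R-continuous; (d) there exists x₀ ∈ X with (x₀, Tx₀) ∈ R; (e) there exists φ ∈ Ω with d(Tx,Ty) ≤ φ(d(x,y)) for all x,y ∈ X with (x,y) ∈ R. Then T has a fixed point. -/
open Filter

variable {X : Type*}

def RPreserving (R : Set (X × X)) (x : ℕ → X) : Prop :=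
  ∀ n : ℕ, (x n, x (n + 1)) ∈ R

def LocallyTTransitive (R : Set (X × X)) (T : X → X) : Prop :=
  ∀ x : ℕ → X, (∀ n : ℕ, x n ∈ Set.range T) → RPreserving R x →
    ∀ a b c : X, a ∈ Set.range x → b ∈ Set.range x → c ∈ Set.range x →
      (a, b) ∈ R → (b, c) ∈ R → (a, c) ∈ R

private lemma lemA (φ : ℝ → ℝ) (hφ1 : ∀ t : ℝ, 0 < t → φ t < t)
    (hφ2 : ∀ t : ℝ, 0 < t → limsup φ (nhdsWithin t (Set.Ioi t)) < t)
    (ε : ℝ) (hε : 0 < ε) :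
    ∃ c, c < ε ∧ ∃ δ > 0, ∀ r, ε ≤ r → r < ε + δ → φ r ≤ c := by
  set L := limsup φ (nhdsWithin ε (Set.Ioi ε)) with hLdef
  have hL : L < ε := hφ2 ε hε
  set b := (L + ε) / 2 with hbdef
  have hLb : L < b := by rw [hbdef]; linarith
  have hbε : b < ε := by rw [hbdef]; linarith
  have hbdd : IsBoundedUnder (· ≤ ·) (nhdsWithin ε (Set.Ioi ε)) φ := by
    refine ⟨ε + 1, ?_⟩
    rw [eventually_map]
    filter_upwards [Ioo_mem_nhdsGT_of_mem
      (Set.mem_Ico.mpr ⟨le_refl ε, lt_add_one ε⟩ : ε ∈ Set.Ico ε (ε + 1))] with r hr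
    exact le_of_lt (lt_trans (hφ1 r (lt_trans hε hr.1)) hr.2)
  have hev : ∀ᶠ r in nhdsWithin ε (Set.Ioi ε), φ r < b :=
    eventually_lt_of_limsup_lt hLb hbdd
  obtain ⟨u, hu, h⟩ := (nhdsGT_basis ε).eventually_iff.mp hev
  refine ⟨max b (φ ε), max_lt hbε (hφ1 ε hε), u - ε, by linarith, ?_⟩
  intro r hr1 hr2
  rcases eq_or_lt_of_le hr1 with h' | h'
  · rw [← h']; exact le_max_right _ _
  · exact le_max_of_le_left (h ⟨h', by linarith⟩).le

/-- Theorem 3.1 (R-continuity case): relation-theoretic Boyd–Wong fixed point theorem. -/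
theorem stmt_11 [MetricSpace X] (R : Set (X × X)) (T : X → X)
    (hcomp : ∀ x : ℕ → X, RPreserving R x → CauchySeq x → ∃ l : X, Tendsto x atTop (nhds l))
    (hTclosed : ∀ x y : X, (x, y) ∈ R → (T x, T y) ∈ R)
    (htrans : LocallyTTransitive R T)
    (hcont : ∀ (x : ℕ → X) (l : X), RPreserving R x → Tendsto x atTop (nhds l) →
      Tendsto (fun n => T (x n)) atTop (nhds (T l)))
    (x₀ : X) (hx₀ : (x₀, T x₀) ∈ R)
    (φ : ℝ → ℝ) (hφ0 : ∀ t : ℝ, 0 ≤ t → 0 ≤ φ t)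
    (hφ1 : ∀ t : ℝ, 0 < t → φ t < t)
    (hφ2 : ∀ t : ℝ, 0 < t → limsup φ (nhdsWithin t (Set.Ioi t)) < t)
    (hcontr : ∀ x y : X, (x, y) ∈ R → dist (T x) (T y) ≤ φ (dist x y)) :
    ∃ x : X, T x = x := by
  classical
  set x : ℕ → X := fun n => T^[n] x₀ with hxdef
  have hsucc : ∀ n : ℕ, x (n + 1) = T (x n) := fun n => Function.iterate_succ_apply' T n x₀
  have hR : RPreserving R x := by
    intro n
    induction n with
    | zero => simpa [hxdef] using hx₀
    | succ n ih =>
      have := hTclosed _ _ ih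
      rwa [← hsucc n, ← hsucc (n + 1)] at this
  -- the chain lemma via local transitivity
  have hchain : ∀ i j : ℕ, i < j → (x (i + 1), x (j + 1)) ∈ R := by
    have hy1 : ∀ n : ℕ, x (n + 1) ∈ Set.range T := fun n => ⟨x n, (hsucc n).symm⟩
    have hy2 : RPreserving R (fun n => x (n + 1)) := fun n => hR (n + 1)
    intro i j
    induction j with
    | zero => omega
    | succ j ih =>
      intro hij
      rcases Nat.lt_succ_iff_lt_or_eq.mp hij with h | h
      · refine htrans (fun n => x (n + 1)) hy1 hy2 (x (i + 1)) (x (j + 1)) (x (j + 2))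
          ?_ ?_ ?_ (ih h) (hR (j + 1))
        · exact ⟨i, rfl⟩
        · exact ⟨j, rfl⟩
        · exact ⟨j + 1, rfl⟩
      · rw [h]; exact hR (j + 1)
  by_cases hfix : ∃ n, x (n + 1) = x n
  · obtain ⟨n, hn⟩ := hfix
    exact ⟨x n, by rw [← hsucc n]; exact hn⟩
  push_neg at hfix
  set d : ℕ → ℝ := fun n => dist (x n) (x (n + 1)) with hddef
  have hd : ∀ n, 0 < d n := fun n => dist_pos.mpr fun h => hfix n h.symm
  have hstep : ∀ n, d (n + 1) ≤ φ (d n) := by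
    intro n
    have := hcontr (x n) (x (n + 1)) (hR n)
    rw [← hsucc n, ← hsucc (n + 1)] at this
    exact this
  have hdec : ∀ n, d (n + 1) < d n := fun n => lt_of_le_of_lt (hstep n) (hφ1 _ (hd n))
  have hanti : Antitone d := antitone_nat_of_succ_le fun n => (hdec n).le
  have hbdd : BddBelow (Set.range d) := ⟨0, fun r ⟨n, hn⟩ => hn ▸ (hd n).le⟩
  set δ : ℝ := ⨅ n, d n with hδdef
  have hδ0 : 0 ≤ δ := le_ciInf fun n => (hd n).le
  have htendδ : Tendsto d atTop (nhds δ) := tendsto_atTop_ciInf hanti hbdd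
  have htend0 : Tendsto d atTop (nhds 0) := by
    rcases eq_or_lt_of_le hδ0 with h | h
    · rwa [← h] at htendδ
    · exfalso
      obtain ⟨c, hc, δ', hδ', hφr⟩ := lemA φ hφ1 hφ2 δ h
      have hgt : ∀ n, δ < d n := fun n => lt_of_le_of_lt (ciInf_le hbdd (n + 1)) (hdec n)
      have hev : ∀ᶠ n in atTop, d n < δ + δ' :=
        htendδ.eventually (gt_mem_nhds (by linarith))
      obtain ⟨n, hn⟩ := hev.exists
      have h1 : φ (d n) ≤ c := hφr (d n) (hgt n).le hn
      have h2 : δ ≤ d (n + 1) := ciInf_le hbdd (n + 1)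
      have h3 := hstep n
      linarith
  -- Cauchy
  have hcauchy : CauchySeq x := by
    rw [Metric.cauchySeq_iff]
    by_contra hnot
    push_neg at hnot
    obtain ⟨ε, hε, hbad⟩ := hnot
    obtain ⟨c, hc, δ', hδ', hφr⟩ := lemA φ hφ1 hφ2 ε hε
    have hev : ∀ᶠ k in atTop, d k < min δ' ((ε - c) / 3) :=
      htend0.eventually (gt_mem_nhds (lt_min hδ' (by linarith)))
    obtain ⟨K, hK⟩ := hev.exists
    obtain ⟨p, hp, q, hq, hpq⟩ := hbad (K + 1)
    have key : ∃ n m₀ : ℕ, K + 1 ≤ n ∧ n < m₀ ∧ ε ≤ dist (x n) (x m₀) := by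
      have hne : p ≠ q := by
        intro h; rw [h, dist_self] at hpq; linarith
      rcases le_total p q with h | h
      · exact ⟨p, q, hp, lt_of_le_of_ne h hne, hpq⟩
      · exact ⟨q, p, hq, lt_of_le_of_ne h (Ne.symm hne), by rwa [dist_comm]⟩
    obtain ⟨n, m₀, hnK, hnltm₀, hnm₀⟩ := key
    have hP : ∃ m', n < m' ∧ ε ≤ dist (x n) (x m') := ⟨m₀, hnltm₀, hnm₀⟩
    set m : ℕ := Nat.find hP with hmdef
    have hspec := Nat.find_spec hP
    rw [← hmdef] at hspec
    obtain ⟨hnm, hdist⟩ := hspec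
    have hm1 : n ≤ m - 1 := by omega
    have hprev : dist (x n) (x (m - 1)) < ε := by
      rcases eq_or_lt_of_le hm1 with h | h
      · rw [← h, dist_self]; exact hε
      · have := Nat.find_min hP (show m - 1 < Nat.find hP by rw [← hmdef]; omega)
        push_neg at this
        exact this h
    have hmsub : m - 1 + 1 = m := by omega
    have hdK' : d K < min δ' ((ε - c) / 3) := hK
    have hdm1 : d (m - 1) = dist (x (m - 1)) (x m) := by
      rw [hddef]; simp only [hmsub]
    have hdmK : d (m - 1) ≤ d K := hanti (by omega)
    have ht2 : dist (x n) (x m) < ε + d K := by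
      have htr := dist_triangle (x n) (x (m - 1)) (x m)
      rw [← hdm1] at htr
      linarith
    have hφt : φ (dist (x n) (x m)) ≤ c := by
      apply hφr _ hdist
      have : d K < δ' := lt_of_lt_of_le hdK' (min_le_left _ _)
      linarith
    have hRnm : (x n, x m) ∈ R := by
      have h1 : n - 1 < m - 1 := by omega
      have := hchain (n - 1) (m - 1) h1
      have hn1 : n - 1 + 1 = n := by omega
      rwa [hn1, hmsub] at this
    have h1 : dist (x (n + 1)) (x (m + 1)) ≤ φ (dist (x n) (x m)) := by
      rw [hsucc n, hsucc m]
      exact hcontr _ _ hRnm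
    have htri : dist (x n) (x m) ≤ d n + φ (dist (x n) (x m)) + d m := by
      have h4 := dist_triangle4 (x n) (x (n + 1)) (x (m + 1)) (x m)
      have e1 : dist (x n) (x (n + 1)) = d n := rfl
      have e2 : dist (x (m + 1)) (x m) = d m := dist_comm _ _
      rw [e1, e2] at h4
      linarith
    have hdn : d n ≤ d K := hanti (by omega)
    have hdm : d m ≤ d K := hanti (by omega)
    have hdK3 : d K < (ε - c) / 3 := lt_of_lt_of_le hdK' (min_le_right _ _)
    linarith
  obtain ⟨l, hl⟩ := hcomp x hR hcauchy
  have hTl : Tendsto (fun n => T (x n)) atTop (nhds (T l)) := hcont x l hR hl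
  have hshift : Tendsto (fun n => x (n + 1)) atTop (nhds l) :=
    hl.comp (tendsto_add_atTop_nat 1)
  have hTl' : Tendsto (fun n => x (n + 1)) atTop (nhds (T l)) := by
    simpa only [hsucc] using hTl
  exact ⟨l, tendsto_nhds_unique hTl' hshift⟩
end

section
/- Let (X,d) be a metric space, R a binary relation on X, and T : X → X. Suppose: (a) every R-preserving Cauchy sequence in X converges; (b) R is T-closed and locally T-transitive; (c) R is d-self-closed; (d) there exists x₀ ∈ X with (x₀, Tx₀) ∈ R; (e) there exists φ ∈ Ω with d(Tx,Ty) ≤ φ(d(x,y)) for all x,y ∈ X with (x,y) ∈ R. Then T has a fixed point. -/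
open Filter

variable {X : Type*}

/-- `R` is `d`-self-closed. -/
def DSelfClosed [MetricSpace X] (R : Set (X × X)) : Prop :=
  ∀ (x : ℕ → X) (l : X), RPreserving R x → Tendsto x atTop (nhds l) →
    ∃ k : ℕ → ℕ, StrictMono k ∧ ∀ i : ℕ, (x (k i), l) ∈ R ∨ (l, x (k i)) ∈ R

/-- Theorem 3.1 (d-self-closed case): relation-theoretic Boyd–Wong fixed point theorem. -/
theorem stmt_12 [MetricSpace X] (R : Set (X × X)) (T : X → X)
    (hcomp : ∀ x : ℕ → X, RPreserving R x → CauchySeq x → ∃ l : X, Tendsto x atTop (nhds l))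
    (hTclosed : ∀ x y : X, (x, y) ∈ R → (T x, T y) ∈ R)
    (htrans : LocallyTTransitive R T)
    (hsc : DSelfClosed R)
    (x₀ : X) (hx₀ : (x₀, T x₀) ∈ R)
    (φ : ℝ → ℝ) (hφ0 : ∀ t : ℝ, 0 ≤ t → 0 ≤ φ t)
    (hφ1 : ∀ t : ℝ, 0 < t → φ t < t)
    (hφ2 : ∀ t : ℝ, 0 < t → limsup φ (nhdsWithin t (Set.Ioi t)) < t)
    (hcontr : ∀ x y : X, (x, y) ∈ R → dist (T x) (T y) ≤ φ (dist x y)) :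
    ∃ x : X, T x = x := by
  classical
  set x : ℕ → X := fun n => T^[n] x₀ with hxdef
  have hxsucc : ∀ n, x (n + 1) = T (x n) := fun n => Function.iterate_succ_apply' T n x₀
  -- the Picard sequence is R-preserving
  have hR : RPreserving R x := by
    intro n
    induction n with
    | zero => simpa [x] using hx₀
    | succ n ih =>
      have h := hTclosed _ _ ih
      rwa [← hxsucc n, ← hxsucc (n + 1)] at h
  -- contraction never increases distance on related pairs
  have key : ∀ a b : X, (a, b) ∈ R → dist (T a) (T b) ≤ dist a b := by
    intro a b hab
    rcases eq_or_lt_of_le (dist_nonneg (x := a) (y := b)) with h | h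
    · have : a = b := dist_eq_zero.mp h.symm
      simp [this]
    · exact (hcontr a b hab).trans (hφ1 _ h).le
  set d : ℕ → ℝ := fun n => dist (x n) (x (n + 1)) with hddef
  have hdφ : ∀ n, d (n + 1) ≤ φ (d n) := by
    intro n
    have h := hcontr _ _ (hR n)
    rw [← hxsucc n, ← hxsucc (n + 1)] at h
    exact h
  have hdle : ∀ n, d (n + 1) ≤ d n := by
    intro n
    have h := key _ _ (hR n)
    rw [← hxsucc n, ← hxsucc (n + 1)] at h
    exact h
  have hanti : Antitone d := antitone_nat_of_succ_le hdle
  have hbdd : BddBelow (Set.range d) := ⟨0, by rintro y ⟨n, rfl⟩; exact dist_nonneg⟩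
  set δ : ℝ := ⨅ n, d n with hδdef
  have h0δ : 0 ≤ δ := le_ciInf fun n => dist_nonneg
  have hlow : ∀ n, δ ≤ d n := fun n => ciInf_le hbdd n
  have htend : Tendsto d atTop (nhds δ) := tendsto_atTop_ciInf hanti hbdd
  -- auxiliary consequence of the limsup condition
  have haux : ∀ t : ℝ, 0 < t → ∃ c η : ℝ, c < t ∧ 0 < η ∧ φ t ≤ c ∧
      ∀ r, t < r → r < t + η → φ r < c := by
    intro t ht
    have hbdd' : IsBoundedUnder (· ≤ ·) (nhdsWithin t (Set.Ioi t)) φ := by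
      refine ⟨t + 1, ?_⟩
      rw [eventually_map]
      filter_upwards [Ioo_mem_nhdsGT_of_mem (Set.mem_Ico.mpr ⟨le_refl t, lt_add_one t⟩)]
        with r hr
      exact ((hφ1 r (ht.trans hr.1)).trans hr.2).le
    set L := limsup φ (nhdsWithin t (Set.Ioi t)) with hLdef
    have hLt : L < t := hφ2 t ht
    set c : ℝ := max ((L + t) / 2) (φ t) with hcdef
    have hct : c < t := max_lt (by linarith) (hφ1 t ht)
    have hLc : L < c := lt_of_lt_of_le (by linarith) (le_max_left _ _)
    have hev : ∀ᶠ r in nhdsWithin t (Set.Ioi t), φ r < c :=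
      eventually_lt_of_limsup_lt hLc hbdd'
    rw [eventually_iff] at hev
    obtain ⟨u, hu, hsub⟩ := mem_nhdsGT_iff_exists_Ioo_subset.mp hev
    refine ⟨c, u - t, hct, by simpa using hu, le_max_right _ _, ?_⟩
    intro r hr1 hr2
    exact hsub ⟨hr1, by linarith⟩
  -- δ = 0
  have hδ0 : δ = 0 := by
    by_contra hne
    have hδpos : 0 < δ := h0δ.lt_of_ne (Ne.symm hne)
    have hgt : ∀ n, δ < d n := by
      intro n
      rcases (hlow n).lt_or_eq with h | h
      · exact h
      · exfalso
        have h1 : d (n + 1) ≤ φ (d n) := hdφ n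
        rw [← h] at h1
        have h2 : φ δ < δ := hφ1 δ hδpos
        have h3 := hlow (n + 1)
        linarith
    obtain ⟨c, η, hcδ, hη, _, hφc⟩ := haux δ hδpos
    have hev : ∀ᶠ n in atTop, d n < δ + η := htend.eventually (gt_mem_nhds (by linarith))
    obtain ⟨n, hn⟩ := hev.exists
    have h1 : φ (d n) < c := hφc _ (hgt n) hn
    have h2 := hdφ n
    have h3 := hlow (n + 1)
    linarith
  have hd0 : Tendsto d atTop (nhds 0) := hδ0 ▸ htend
  -- chain-transitivity along the Picard sequence
  have hchain : ∀ n, 1 ≤ n → ∀ m, n < m → (x n, x m) ∈ R := by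
    intro n hn
    set y : ℕ → X := fun i => x (i + 1) with hydef
    have hyT : ∀ i, y i ∈ Set.range T := fun i => ⟨x i, (hxsucc i).symm⟩
    have hyR : RPreserving R y := fun i => hR (i + 1)
    have hxy : ∀ m, 1 ≤ m → x m ∈ Set.range y := by
      intro m hm
      exact ⟨m - 1, show x (m - 1 + 1) = x m by congr 1; omega⟩
    intro m hm
    induction m, hm using Nat.le_induction with
    | base => exact hR n
    | succ m hm ih =>
      exact htrans y hyT hyR (x n) (x m) (x (m + 1)) (hxy n hn) (hxy m (by omega))
        (hxy (m + 1) (by omega)) ih (hR m)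
  -- Cauchy
  have hcauchy : CauchySeq x := by
    rw [Metric.cauchySeq_iff]
    by_contra hnc
    push_neg at hnc
    obtain ⟨ε, hε, hfail⟩ := hnc
    obtain ⟨c, η, hcε, hη, hφtc, hφc⟩ := haux ε hε
    have hev : ∀ᶠ n in atTop, d n < min η ((ε - c) / 2) :=
      hd0.eventually (gt_mem_nhds (lt_min hη (by linarith)))
    obtain ⟨N₀, hN₀⟩ := eventually_atTop.mp hev
    set N := max N₀ 1 with hNdef
    obtain ⟨m, hm, n, hn, hd_mn⟩ := hfail N
    have hne : m ≠ n := by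
      rintro rfl
      simp only [dist_self] at hd_mn
      linarith
    obtain ⟨p, q, hpq, hqN, hdist⟩ : ∃ p q, q < p ∧ N ≤ q ∧ ε ≤ dist (x p) (x q) := by
      rcases lt_or_gt_of_ne hne with h | h
      · exact ⟨n, m, h, hm, by rwa [dist_comm]⟩
      · exact ⟨m, n, h, hn, hd_mn⟩
    have hex : ∃ p', q < p' ∧ ε ≤ dist (x p') (x q) := ⟨p, hpq, hdist⟩
    set m₀ := Nat.find hex with hm₀def
    obtain ⟨hm₀q, hm₀d⟩ := Nat.find_spec hex
    have hprev : dist (x (m₀ - 1)) (x q) < ε := by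
      by_cases h : q < m₀ - 1
      · have hmin := Nat.find_min hex (show m₀ - 1 < m₀ by omega)
        push_neg at hmin
        exact hmin h
      · have hq : m₀ - 1 = q := by omega
        rw [hq]; simpa using hε
    have hdsmall : ∀ j, q ≤ j → d j < min η ((ε - c) / 2) := fun j hj =>
      hN₀ j (le_trans (le_trans (le_max_left _ _) hqN) hj)
    set t := dist (x m₀) (x q) with htdef
    have hm₀pos : 1 ≤ m₀ := by omega
    have hstep : dist (x m₀) (x (m₀ - 1)) = d (m₀ - 1) := by
      have hx1 : m₀ - 1 + 1 = m₀ := by omega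
      rw [hddef]; simp only; rw [hx1, dist_comm]
    have ht2 : t < ε + η := by
      have h1 : t ≤ dist (x m₀) (x (m₀ - 1)) + dist (x (m₀ - 1)) (x q) := dist_triangle _ _ _
      have h2 : d (m₀ - 1) < η := lt_of_lt_of_le (hdsmall _ (by omega)) (min_le_left _ _)
      rw [hstep] at h1
      linarith
    have hq1 : 1 ≤ q := le_trans (le_max_right _ _) hqN
    have hRqm : (x q, x m₀) ∈ R := hchain q hq1 m₀ hm₀q
    have hcon : dist (x (q + 1)) (x (m₀ + 1)) ≤ φ t := by
      calc dist (x (q + 1)) (x (m₀ + 1)) = dist (T (x q)) (T (x m₀)) := by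
            rw [hxsucc q, hxsucc m₀]
        _ ≤ φ (dist (x q) (x m₀)) := hcontr _ _ hRqm
        _ = φ t := by rw [htdef, dist_comm]
    have hφt : φ t ≤ c := by
      rcases eq_or_lt_of_le hm₀d with h | h
      · rw [← h]; exact hφtc
      · exact (hφc t h ht2).le
    have htri : t ≤ d q + dist (x (q + 1)) (x (m₀ + 1)) + d m₀ := by
      have h1 : dist (x q) (x m₀) ≤ dist (x q) (x (q + 1)) + dist (x (q + 1)) (x m₀) :=
        dist_triangle _ _ _
      have h2 : dist (x (q + 1)) (x m₀) ≤ dist (x (q + 1)) (x (m₀ + 1)) +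
          dist (x (m₀ + 1)) (x m₀) := dist_triangle _ _ _
      have h3 : dist (x (m₀ + 1)) (x m₀) = d m₀ := dist_comm _ _
      rw [htdef, dist_comm]
      linarith [h3 ▸ h2]
    have hdq : d q < (ε - c) / 2 := lt_of_lt_of_le (hdsmall q le_rfl) (min_le_right _ _)
    have hdm : d m₀ < (ε - c) / 2 := lt_of_lt_of_le (hdsmall m₀ (by omega)) (min_le_right _ _)
    have : t < ε := by linarith
    linarith
  obtain ⟨l, hl⟩ := hcomp x hR hcauchy
  obtain ⟨k, hk, hkR⟩ := hsc x l hR hl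
  have hkey : ∀ i, dist (x (k i + 1)) (T l) ≤ dist (x (k i)) l := by
    intro i
    have hb : dist (T (x (k i))) (T l) ≤ φ (dist (x (k i)) l) := by
      rcases hkR i with h | h
      · exact hcontr _ _ h
      · have := hcontr _ _ h
        rwa [dist_comm (T l), dist_comm l] at this
    rw [hxsucc]
    rcases eq_or_lt_of_le (dist_nonneg (x := x (k i)) (y := l)) with h | h
    · have hxeq : x (k i) = l := dist_eq_zero.mp h.symm
      rw [hxeq]; simp
    · exact hb.trans (hφ1 _ h).le
  have hkt : Tendsto (fun i => k i + 1) atTop atTop :=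
    tendsto_atTop_mono (fun i => Nat.le_succ (k i)) hk.tendsto_atTop
  have hx1 : Tendsto (fun i => x (k i + 1)) atTop (nhds l) := hl.comp hkt
  have hxk : Tendsto (fun i => dist (x (k i)) l) atTop (nhds 0) :=
    tendsto_iff_dist_tendsto_zero.mp (hl.comp hk.tendsto_atTop)
  have hd2 : Tendsto (fun i => dist (x (k i + 1)) (T l)) atTop (nhds 0) :=
    squeeze_zero (fun i => dist_nonneg) hkey hxk
  have hx2 : Tendsto (fun i => x (k i + 1)) atTop (nhds (T l)) :=
    tendsto_iff_dist_tendsto_zero.mpr hd2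
  exact ⟨l, tendsto_nhds_unique hx2 hx1⟩
end

section
/- Under the hypotheses of the relation-theoretic Boyd-Wong theorem (R-completeness of (X,d); R T-closed and locally T-transitive; T R-continuous or R d-self-closed; X(T,R) nonempty; φ ∈ Ω with d(Tx,Ty) ≤ φ(d(x,y)) whenever (x,y) ∈ R), if additionally T(X) is R^s-connected, then T has a unique fixed point. -/
open Filter

variable {X : Type*}

/-- `E` is `R^s`-connected: any two points of `E` are joined by a finite path whose
consecutive terms are `R^s`-related. -/
def RsConnected (R : Set (X × X)) (E : Set X) : Prop :=
  ∀ x ∈ E, ∀ y ∈ E, ∃ (k : ℕ) (z : ℕ → X), z 0 = x ∧ z k = y ∧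
    ∀ i < k, (z i, z (i + 1)) ∈ R ∨ (z (i + 1), z i) ∈ R

/- Iterating the contraction along an `R`-related pair drives the distance to `0`: the distances
decrease to some `r`, and `r > 0` is impossible because `φ ≤ c < r` on some interval `[r, r + δ)`.
The Picard orbit of `T x₀` lies in `T(X)`, so local `T`-transitivity makes any two of its terms
`R`-related, and the Boyd–Wong estimate then shows that it is Cauchy; its limit is fixed either by
`R`-continuity or by `d`-self-closedness. Two fixed points are joined by an `R^s`-path in `T(X)`
whose iterated links all shrink to `0`, so they coincide. -/

open Topology Function

structure IsBoydWongControl (φ : ℝ → ℝ) : Prop where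
  lt_self : ∀ t : ℝ, 0 < t → φ t < t
  limsup_lt : ∀ t : ℝ, 0 < t → limsup φ (𝓝[>] t) < t

namespace IsBoydWongControl

variable {φ : ℝ → ℝ}

theorem exists_le_of_mem_Ico (hφ : IsBoydWongControl φ) {r : ℝ} (hr : 0 < r) :
    ∃ c < r, ∃ δ > 0, ∀ s ∈ Set.Ico r (r + δ), φ s ≤ c := by
  set L := limsup φ (𝓝[>] r)
  have hL : L < r := hφ.limsup_lt r hr
  have hbdd : IsBoundedUnder (· ≤ ·) (𝓝[>] r) φ := by
    refine ⟨r + 1, eventually_map.2 ?_⟩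
    filter_upwards [Ioo_mem_nhdsGT (lt_add_one r)] with s hs
    exact (hφ.lt_self s (hr.trans hs.1)).le.trans hs.2.le
  have hev : ∀ᶠ s in 𝓝[>] r, φ s < (L + r) / 2 :=
    eventually_lt_of_limsup_lt (by linarith) hbdd
  obtain ⟨u, hru, hu⟩ := mem_nhdsGT_iff_exists_Ioo_subset.1 hev
  refine ⟨max ((L + r) / 2) (φ r), max_lt (by linarith) (hφ.lt_self r hr), u - r,
    sub_pos.2 hru, fun s ⟨hrs, hsu⟩ => ?_⟩
  rcases hrs.eq_or_lt with rfl | hrs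
  · exact le_max_right _ _
  · exact (hu ⟨hrs, by linarith⟩).le.trans (le_max_left _ _)

theorem tendsto_zero_of_antitone (hφ : IsBoydWongControl φ) {a : ℕ → ℝ}
    (ha₀ : ∀ n, 0 ≤ a n) (ha : Antitone a) (hstep : ∀ n, 0 < a n → a (n + 1) ≤ φ (a n)) :
    Tendsto a atTop (𝓝 0) := by
  have hbdd : BddBelow (Set.range a) := ⟨0, Set.forall_mem_range.2 ha₀⟩
  have hlim : Tendsto a atTop (𝓝 (⨅ n, a n)) := tendsto_atTop_ciInf ha hbdd
  have hinf : ∀ n, ⨅ n, a n ≤ a n := ciInf_le hbdd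
  rcases (le_ciInf ha₀).eq_or_lt with hr | hr
  · rwa [← hr] at hlim
  obtain ⟨c, hcr, δ, hδ, hc⟩ := hφ.exists_le_of_mem_Ico hr
  obtain ⟨n, hn⟩ := (hlim.eventually (gt_mem_nhds (lt_add_of_pos_right _ hδ))).exists
  have := hstep n (hr.trans_le (hinf n))
  linarith [hc (a n) ⟨hinf n, hn⟩, hinf (n + 1)]

theorem cauchySeq [MetricSpace X] (hφ : IsBoydWongControl φ) {y : ℕ → X}
    (hy : Tendsto (fun n => dist (y n) (y (n + 1))) atTop (𝓝 0))
    (hstep : ∀ m n, m < n → dist (y (m + 1)) (y (n + 1)) ≤ φ (dist (y m) (y n))) :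
    CauchySeq y := by
  refine Metric.cauchySeq_iff'.2 fun ε hε => ?_
  obtain ⟨c, hcε, δ, hδ, hc⟩ := hφ.exists_le_of_mem_Ico hε
  set η := min δ (ε - c)
  have hη : 0 < η := lt_min hδ (sub_pos.2 hcε)
  obtain ⟨N, hN⟩ := eventually_atTop.1 (hy.eventually (gt_mem_nhds (by positivity : 0 < η / 3)))
  have hball : ∀ k, dist (y N) (y (N + k)) < ε := by
    intro k
    induction k with
    | zero => simpa using hε
    | succ k ih =>
      rw [← add_assoc]
      have hnear : dist (y N) (y (N + k + 1)) < ε + δ := by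
        linarith [dist_triangle (y N) (y (N + k)) (y (N + k + 1)), hN (N + k) (by omega),
          min_le_left δ (ε - c)]
      by_contra! hfar
      -- One more step from a pair at distance in `[ε, ε + δ)` lands within `c + 2η/3 < ε`.
      have hshift := (hstep N (N + k + 1) (by omega)).trans (hc _ ⟨hfar, hnear⟩)
      have hlast := hN (N + k + 1) (by omega)
      rw [dist_comm] at hlast
      linarith [dist_triangle4 (y N) (y (N + 1)) (y (N + k + 1 + 1)) (y (N + k + 1)),
        hN N le_rfl, min_le_right δ (ε - c)]
  refine ⟨N, fun n hn => ?_⟩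
  obtain ⟨k, rfl⟩ := Nat.exists_eq_add_of_le hn
  rw [dist_comm]
  exact hball k

end IsBoydWongControl

section RelationTheoretic

variable {R : Set (X × X)} {T : X → X}

theorem iterate_mem_of_mem (hTclosed : ∀ x y : X, (x, y) ∈ R → (T x, T y) ∈ R) {x y : X}
    (hxy : (x, y) ∈ R) (n : ℕ) : (T^[n] x, T^[n] y) ∈ R := by
  induction n with
  | zero => exact hxy
  | succ n ih => simpa only [iterate_succ_apply'] using hTclosed _ _ ih

theorem LocallyTTransitive.mem_of_lt (htrans : LocallyTTransitive R T) {y : ℕ → X}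
    (hy : ∀ n, y n ∈ Set.range T) (hpres : RPreserving R y) {m n : ℕ} (hmn : m < n) :
    (y m, y n) ∈ R := by
  induction n, hmn using Nat.le_induction with
  | base => exact hpres m
  | succ n _ ih =>
    exact htrans y hy hpres _ _ _ ⟨m, rfl⟩ ⟨n, rfl⟩ ⟨n + 1, rfl⟩ ih (hpres n)

variable [MetricSpace X] {φ : ℝ → ℝ}

theorem dist_map_le_of_mem (hφ : ∀ t : ℝ, 0 < t → φ t < t)
    (hcontr : ∀ x y : X, (x, y) ∈ R → dist (T x) (T y) ≤ φ (dist x y)) {x y : X}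
    (hxy : (x, y) ∈ R) : dist (T x) (T y) ≤ dist x y := by
  rcases (dist_nonneg (x := x) (y := y)).eq_or_lt with h | h
  · rw [dist_le_zero.1 h.ge, dist_self, dist_self]
  · exact (hcontr x y hxy).trans (hφ _ h).le

theorem tendsto_dist_iterate_of_mem (hφ : IsBoydWongControl φ)
    (hTclosed : ∀ x y : X, (x, y) ∈ R → (T x, T y) ∈ R)
    (hcontr : ∀ x y : X, (x, y) ∈ R → dist (T x) (T y) ≤ φ (dist x y)) {u v : X}
    (huv : (u, v) ∈ R) : Tendsto (fun n => dist (T^[n] u) (T^[n] v)) atTop (𝓝 0) := by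
  refine hφ.tendsto_zero_of_antitone (fun _ => dist_nonneg)
    (antitone_nat_of_succ_le fun n => ?_) fun n _ => ?_
  · simpa only [iterate_succ_apply'] using
      dist_map_le_of_mem hφ.lt_self hcontr (iterate_mem_of_mem hTclosed huv n)
  · simpa only [iterate_succ_apply'] using hcontr _ _ (iterate_mem_of_mem hTclosed huv n)

theorem eq_of_fixed_of_rsConnected (hφ : IsBoydWongControl φ)
    (hTclosed : ∀ x y : X, (x, y) ∈ R → (T x, T y) ∈ R)
    (hcontr : ∀ x y : X, (x, y) ∈ R → dist (T x) (T y) ≤ φ (dist x y))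
    (hconn : RsConnected R (Set.range T)) {u v : X} (hu : T u = u) (hv : T v = v) : u = v := by
  obtain ⟨k, z, rfl, rfl, hz⟩ := hconn _ ⟨_, hu⟩ _ ⟨_, hv⟩
  have hlinks : ∀ i ∈ Finset.range k,
      Tendsto (fun n => dist (T^[n] (z i)) (T^[n] (z (i + 1)))) atTop (𝓝 0) := by
    intro i hi
    rcases hz i (Finset.mem_range.1 hi) with h | h
    · exact tendsto_dist_iterate_of_mem hφ hTclosed hcontr h
    · simpa only [dist_comm] using tendsto_dist_iterate_of_mem hφ hTclosed hcontr h
  have hle : ∀ n, dist (z 0) (z k) ≤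
      ∑ i ∈ Finset.range k, dist (T^[n] (z i)) (T^[n] (z (i + 1))) := by
    intro n
    have := dist_le_range_sum_dist (fun i => T^[n] (z i)) k
    rwa [iterate_fixed hu, iterate_fixed hv] at this
  exact dist_le_zero.1 (ge_of_tendsto' (by simpa using tendsto_finsetSum _ hlinks) hle)

theorem fixed_of_tendsto_of_dSelfClosed (hφ : ∀ t : ℝ, 0 < t → φ t < t)
    (hcontr : ∀ x y : X, (x, y) ∈ R → dist (T x) (T y) ≤ φ (dist x y)) (hsc : DSelfClosed R)
    {y : ℕ → X} (hyT : ∀ n, T (y n) = y (n + 1)) (hpres : RPreserving R y) {l : X}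
    (hl : Tendsto y atTop (𝓝 l)) : T l = l := by
  obtain ⟨k, hk, hkl⟩ := hsc y l hpres hl
  have hle : ∀ i, dist (T (y (k i))) (T l) ≤ dist (y (k i)) l := fun i =>
    (hkl i).elim (dist_map_le_of_mem hφ hcontr) fun h => by
      simpa only [dist_comm] using dist_map_le_of_mem hφ hcontr h
  have hTl : Tendsto (fun i => T (y (k i))) atTop (𝓝 (T l)) :=
    tendsto_iff_dist_tendsto_zero.2 <| squeeze_zero (fun _ => dist_nonneg) hle <|
      tendsto_iff_dist_tendsto_zero.1 (hl.comp hk.tendsto_atTop)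
  have hl' : Tendsto (fun i => T (y (k i))) atTop (𝓝 l) := by
    simp only [hyT]
    exact hl.comp ((tendsto_add_atTop_nat 1).comp hk.tendsto_atTop)
  exact tendsto_nhds_unique hTl hl'

end RelationTheoretic

theorem stmt_13_general [MetricSpace X] (R : Set (X × X)) (T : X → X)
    (hcomp : ∀ x : ℕ → X, RPreserving R x → CauchySeq x → ∃ l : X, Tendsto x atTop (nhds l))
    (hTclosed : ∀ x y : X, (x, y) ∈ R → (T x, T y) ∈ R)
    (htrans : LocallyTTransitive R T)
    (hcont : (∀ (x : ℕ → X) (l : X), RPreserving R x → Tendsto x atTop (nhds l) →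
      Tendsto (fun n => T (x n)) atTop (nhds (T l))) ∨ DSelfClosed R)
    (x₀ : X) (hx₀ : (x₀, T x₀) ∈ R)
    (φ : ℝ → ℝ)
    (hφ1 : ∀ t : ℝ, 0 < t → φ t < t)
    (hφ2 : ∀ t : ℝ, 0 < t → limsup φ (nhdsWithin t (Set.Ioi t)) < t)
    (hcontr : ∀ x y : X, (x, y) ∈ R → dist (T x) (T y) ≤ φ (dist x y))
    (hconn : RsConnected R (Set.range T)) :
    ∃! x : X, T x = x := by
  have hφ : IsBoydWongControl φ := ⟨hφ1, hφ2⟩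
  set y : ℕ → X := fun n => T^[n] (T x₀)
  have hyT : ∀ n, T (y n) = y (n + 1) := fun n => (iterate_succ_apply' T n (T x₀)).symm
  have hrange : ∀ n, y n ∈ Set.range T := fun n => ⟨T^[n] x₀, (iterate_succ_apply' T n x₀).symm⟩
  have hpres : RPreserving R y := iterate_mem_of_mem hTclosed (hTclosed _ _ hx₀)
  have hcauchy : CauchySeq y :=
    hφ.cauchySeq (tendsto_dist_iterate_of_mem hφ hTclosed hcontr (hTclosed _ _ hx₀))
      fun m n hmn => by simpa only [hyT] using hcontr _ _ (htrans.mem_of_lt hrange hpres hmn)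
  obtain ⟨l, hl⟩ := hcomp y hpres hcauchy
  have hfix : T l = l := by
    rcases hcont with hcont | hsc
    · refine tendsto_nhds_unique (hcont y l hpres hl) ?_
      simp only [hyT]
      exact hl.comp (tendsto_add_atTop_nat 1)
    · exact fixed_of_tendsto_of_dSelfClosed hφ1 hcontr hsc hyT hpres hl
  exact ⟨l, hfix, fun u hu => eq_of_fixed_of_rsConnected hφ hTclosed hcontr hconn hu hfix⟩

/-- Theorem 3.3: under the hypotheses of the relation-theoretic Boyd–Wong theorem, if
additionally `T(X)` is `R^s`-connected, then `T` has a unique fixed point. -/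
theorem stmt_13 [MetricSpace X] (R : Set (X × X)) (T : X → X)
    (hcomp : ∀ x : ℕ → X, RPreserving R x → CauchySeq x → ∃ l : X, Tendsto x atTop (nhds l))
    (hTclosed : ∀ x y : X, (x, y) ∈ R → (T x, T y) ∈ R)
    (htrans : LocallyTTransitive R T)
    (hcont : (∀ (x : ℕ → X) (l : X), RPreserving R x → Tendsto x atTop (nhds l) →
      Tendsto (fun n => T (x n)) atTop (nhds (T l))) ∨ DSelfClosed R)
    (x₀ : X) (hx₀ : (x₀, T x₀) ∈ R)
    (φ : ℝ → ℝ) (hφ0 : ∀ t : ℝ, 0 ≤ t → 0 ≤ φ t)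
    (hφ1 : ∀ t : ℝ, 0 < t → φ t < t)
    (hφ2 : ∀ t : ℝ, 0 < t → limsup φ (nhdsWithin t (Set.Ioi t)) < t)
    (hcontr : ∀ x y : X, (x, y) ∈ R → dist (T x) (T y) ≤ φ (dist x y))
    (hconn : RsConnected R (Set.range T)) :
    ∃! x : X, T x = x :=
  stmt_13_general R T hcomp hTclosed htrans hcont x₀ hx₀ φ hφ1 hφ2 hcontr hconn
end

section
/- Let (X,d) be a complete metric space equipped with a partial order ⪯ and T a self-mapping on X. Suppose T is increasing, T is continuous, there exists x₀ ∈ X with x₀ ⪯ T(x₀), and there exists φ ∈ Φ such that d(Tx,Ty) ≤ φ(d(x,y)) for all x,y ∈ X with x ⪯ y. Then T has a fixed point. -/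
/-!
Along the orbit `xₙ = Tⁿ x₀`, which is increasing, the contraction condition applies to every
pair `xₙ ⪯ xₘ`. The steps `dₙ = d(xₙ, xₙ₊₁)` decrease strictly, and their limit `δ` must be `0`:
since `φ` stays below some `c < δ` on a right neighbourhood of `δ`, the bound `dₙ₊₁ ≤ φ(dₙ)`
would eventually push `dₙ₊₁` below `δ`. The same right-neighbourhood bound at a level `ε` keeps
the orbit, once its steps are small, inside a ball of radius about `ε` around each of its points;
so the orbit is Cauchy, and its limit is fixed by continuity of `T`.
-/

open Filter Topology Set

/-- The class `Φ` of comparison functions of Boyd–Wong type. -/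
structure IsBoydWongGauge (φ : ℝ → ℝ) : Prop where
  lt_self : ∀ t, 0 < t → φ t < t
  exists_tendsto_nhdsGT : ∀ t, 0 < t → ∃ L < t, Tendsto φ (𝓝[>] t) (𝓝 L)

namespace IsBoydWongGauge

variable {φ : ℝ → ℝ}

theorem exists_lt_eventually_le (hφ : IsBoydWongGauge φ) {t : ℝ} (ht : 0 < t) :
    ∃ c < t, ∀ᶠ s in 𝓝[≥] t, φ s ≤ c := by
  obtain ⟨L, hLt, hL⟩ := hφ.exists_tendsto_nhdsGT t ht
  have hGT : ∀ᶠ s in 𝓝[>] t, φ s < (L + t) / 2 := hL.eventually_lt_const (by linarith)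
  refine ⟨max ((L + t) / 2) (φ t), max_lt (by linarith) (hφ.lt_self t ht), ?_⟩
  rw [← nhdsGT_sup_nhdsWithin_singleton, nhdsWithin_singleton]
  exact eventually_sup.2 ⟨hGT.mono fun s hs => hs.le.trans (le_max_left _ _), eventually_pure.2 (le_max_right _ _)⟩

theorem tendsto_zero_of_succ_le (hφ : IsBoydWongGauge φ) {D : ℕ → ℝ} (hpos : ∀ n, 0 < D n)
    (hle : ∀ n, D (n + 1) ≤ φ (D n)) : Tendsto D atTop (𝓝 0) := by
  have hlt : ∀ n, D (n + 1) < D n := fun n => (hle n).trans_lt (hφ.lt_self _ (hpos n))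
  have hanti : StrictAnti D := strictAnti_nat_of_succ_lt hlt
  have hbdd : BddBelow (range D) := ⟨0, forall_mem_range.2 fun n => (hpos n).le⟩
  have hδ : Tendsto D atTop (𝓝 (⨅ n, D n)) := tendsto_atTop_ciInf hanti.antitone hbdd
  set δ := ⨅ n, D n
  have hδD : ∀ n, δ < D n := fun n => (ciInf_le hbdd (n + 1)).trans_lt (hlt n)
  suffices δ = 0 by rwa [this] at hδ
  by_contra hδ0
  have hδpos : 0 < δ := (le_ciInf fun n => (hpos n).le).lt_of_ne' hδ0
  obtain ⟨c, hcδ, hc⟩ := hφ.exists_lt_eventually_le hδpos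
  have hδGE : Tendsto D atTop (𝓝[≥] δ) :=
    tendsto_nhdsWithin_of_tendsto_nhds_of_eventually_within _ hδ
      (Eventually.of_forall fun n => (hδD n).le)
  obtain ⟨n, hn⟩ := (hδGE.eventually hc).exists
  exact (hle n).trans hn |>.trans_lt hcδ |>.not_ge (ciInf_le hbdd (n + 1))

theorem cauchySeq_of_dist_succ_le (hφ : IsBoydWongGauge φ) {X : Type*} [PseudoMetricSpace X]
    {x : ℕ → X} (hstep : Tendsto (fun n => dist (x n) (x (n + 1))) atTop (𝓝 0))
    (hle : ∀ n m, n ≤ m → dist (x (n + 1)) (x (m + 1)) ≤ φ (dist (x n) (x m))) :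
    CauchySeq x := by
  refine Metric.cauchySeq_iff'.2 fun ε hε => ?_
  obtain ⟨c, hcε, hc⟩ := hφ.exists_lt_eventually_le (half_pos hε)
  obtain ⟨u, hu, hcu⟩ := mem_nhdsGE_iff_exists_Ico_subset.1 hc
  set η := min (u - ε / 2) (ε / 2)
  have hη : 0 < min η (ε / 2 - c) := lt_min (lt_min (by linarith [mem_Ioi.1 hu]) (half_pos hε))
    (by linarith)
  obtain ⟨N, hN⟩ := (hstep.eventually (gt_mem_nhds hη)).exists_forall_of_atTop
  have hsmall : ∀ k, N ≤ k → dist (x k) (x (k + 1)) < η ∧ dist (x k) (x (k + 1)) < ε / 2 - c :=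
    fun k hk => lt_min_iff.1 (hN k hk)
  -- The ball of radius `ε / 2 + η` around `x N` is invariant along the orbit: either the
  -- previous distance is `≥ ε / 2`, and `φ` maps it to at most `c`, or it is smaller and `φ`
  -- decreases it.
  have hball : ∀ m, N ≤ m → dist (x m) (x N) < ε / 2 + η := by
    intro m hm
    rw [dist_comm]
    induction m, hm using Nat.le_induction with
    | base => simpa using add_pos (half_pos hε) (lt_min_iff.1 hη).1
    | succ m hm ih =>
      rcases (dist_nonneg (x := x N) (y := x m)).eq_or_lt with hzero | hpos
      · calc dist (x N) (x (m + 1)) ≤ dist (x N) (x m) + dist (x m) (x (m + 1)) :=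
              dist_triangle _ _ _
          _ < ε / 2 + η := by linarith [(hsmall m hm).1, min_le_right (u - ε / 2) (ε / 2)]
      have htri : dist (x N) (x (m + 1)) ≤ dist (x N) (x (N + 1)) + φ (dist (x N) (x m)) :=
        (dist_triangle _ (x (N + 1)) _).trans (by gcongr; exact hle N m hm)
      rcases le_or_gt (ε / 2) (dist (x N) (x m)) with hfar | hnear
      · have hφc : φ (dist (x N) (x m)) ≤ c :=
          hcu ⟨hfar, ih.trans_le (by linarith [min_le_left (u - ε / 2) (ε / 2)])⟩
        linarith [(hsmall N le_rfl).2, (lt_min_iff.1 hη).1]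
      · linarith [hφ.lt_self _ hpos, (hsmall N le_rfl).1]
  exact ⟨N, fun m hm => (hball m hm).trans_le (by linarith [min_le_right (u - ε / 2) (ε / 2)])⟩

end IsBoydWongGauge

theorem stmt_16_general {X : Type*} [MetricSpace X] [CompleteSpace X] [PartialOrder X]
    (T : X → X)
    (hmono : ∀ x y : X, x ≤ y → T x ≤ T y)
    (hcont : Continuous T)
    (x₀ : X) (hx₀ : x₀ ≤ T x₀)
    (φ : ℝ → ℝ)
    (hφ1 : ∀ t : ℝ, 0 < t → φ t < t)
    (hφ2 : ∀ t : ℝ, 0 < t → ∃ L : ℝ, L < t ∧ Tendsto φ (nhdsWithin t (Set.Ioi t)) (nhds L))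
    (hcontr : ∀ x y : X, x ≤ y → dist (T x) (T y) ≤ φ (dist x y)) :
    ∃ x : X, T x = x := by
  have hφ : IsBoydWongGauge φ := ⟨hφ1, hφ2⟩
  by_cases hfix : ∃ n, T (T^[n] x₀) = T^[n] x₀
  · obtain ⟨n, hn⟩ := hfix
    exact ⟨_, hn⟩
  push Not at hfix
  have horbit : Monotone fun n => T^[n] x₀ := Monotone.monotone_iterate_of_le_map hmono hx₀
  have hle : ∀ n m, n ≤ m →
      dist (T^[n + 1] x₀) (T^[m + 1] x₀) ≤ φ (dist (T^[n] x₀) (T^[m] x₀)) := by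
    intro n m hnm
    simpa only [Function.iterate_succ_apply'] using hcontr _ _ (horbit hnm)
  have hstep : Tendsto (fun n => dist (T^[n] x₀) (T^[n + 1] x₀)) atTop (𝓝 0) :=
    hφ.tendsto_zero_of_succ_le
      (fun n => dist_pos.2 fun h => hfix n (by rw [← Function.iterate_succ_apply' T n x₀]; exact h.symm))
      (fun n => hle n (n + 1) n.le_succ)
  obtain ⟨p, hp⟩ := cauchySeq_tendsto_of_complete (hφ.cauchySeq_of_dist_succ_le hstep hle)
  exact ⟨p, isFixedPt_of_tendsto_iterate hp hcont.continuousAt⟩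

/-- Theorem 1.3 (continuity case): ordered Boyd–Wong type fixed point theorem with
`φ ∈ Φ` in a complete metric space with a partial order. -/
theorem stmt_16 {X : Type*} [MetricSpace X] [CompleteSpace X] [PartialOrder X]
    (T : X → X)
    (hmono : ∀ x y : X, x ≤ y → T x ≤ T y)
    (hcont : Continuous T)
    (x₀ : X) (hx₀ : x₀ ≤ T x₀)
    (φ : ℝ → ℝ) (hφ0 : ∀ t : ℝ, 0 ≤ t → 0 ≤ φ t)
    (hφ1 : ∀ t : ℝ, 0 < t → φ t < t)
    (hφ2 : ∀ t : ℝ, 0 < t → ∃ L : ℝ, L < t ∧ Tendsto φ (nhdsWithin t (Set.Ioi t)) (nhds L))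
    (hcontr : ∀ x y : X, x ≤ y → dist (T x) (T y) ≤ φ (dist x y)) :
    ∃ x : X, T x = x :=
  stmt_16_general T hmono hcont x₀ hx₀ φ hφ1 hφ2 hcontr
end

section
/- Let (X,d) be a complete metric space equipped with a partial order ⪯ and T an increasing self-mapping on X such that (X,d,⪯) has the ICU property, there exists x₀ ∈ X with x₀ ⪯ T(x₀), and there exists φ ∈ Φ with d(Tx,Ty) ≤ φ(d(x,y)) for all x ⪯ y. If additionally for all x,y ∈ X there exists z ∈ X with x ⪯ z and y ⪯ z, then T has a unique fixed point. -/
open Filter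

lemma aux_tendsto_zero (φ : ℝ → ℝ)
    (hφ1 : ∀ t : ℝ, 0 < t → φ t < t)
    (hφ2 : ∀ t : ℝ, 0 < t → ∃ L : ℝ, L < t ∧ Tendsto φ (nhdsWithin t (Set.Ioi t)) (nhds L))
    (e : ℕ → ℝ) (he0 : ∀ n, 0 ≤ e n)
    (hrec : ∀ n, 0 < e n → e (n+1) ≤ φ (e n))
    (hzero : ∀ n, e n = 0 → e (n+1) = 0) :
    Tendsto e atTop (nhds 0) := by
  by_cases hall : ∀ n, 0 < e n
  · have hdec : ∀ n, e (n+1) < e n := fun n => (hrec n (hall n)).trans_lt (hφ1 _ (hall n))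
    have hanti : StrictAnti e := strictAnti_nat_of_succ_lt hdec
    have hbdd : BddBelow (Set.range e) := ⟨0, by rintro _ ⟨n, rfl⟩; exact he0 n⟩
    set δ := ⨅ n, e n with hδ
    have htend : Tendsto e atTop (nhds δ) := tendsto_atTop_ciInf hanti.antitone hbdd
    have hδ0 : 0 ≤ δ := le_ciInf he0
    rcases hδ0.lt_or_eq with hpos | hzeroδ
    · exfalso
      have hgt : ∀ n, δ < e n := by
        intro n
        rcases (ciInf_le hbdd n).lt_or_eq with h | h
        · exact h
        · exfalso
          have h1 := ciInf_le hbdd (n+1)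
          have h2 := hdec n
          rw [← hδ] at h1
          linarith
      obtain ⟨L, hL, hLt⟩ := hφ2 δ hpos
      have h1 : Tendsto e atTop (nhdsWithin δ (Set.Ioi δ)) :=
        tendsto_nhdsWithin_of_tendsto_nhds_of_eventually_within _ htend
          (Eventually.of_forall hgt)
      have h2 : Tendsto (fun n => φ (e n)) atTop (nhds L) := hLt.comp h1
      have h3 : Tendsto (fun n => e (n+1)) atTop (nhds δ) :=
        htend.comp (tendsto_add_atTop_nat 1)
      have : δ ≤ L := le_of_tendsto_of_tendsto' h3 h2 (fun n => hrec n (hall n))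
      linarith
    · rw [hzeroδ]; exact htend
  · push_neg at hall
    obtain ⟨n, hn⟩ := hall
    have hn0 : e n = 0 := le_antisymm hn (he0 n)
    have hconst : ∀ m ≥ n, e m = 0 := by
      intro m hm
      induction m with
      | zero => simp [Nat.le_zero.mp hm ▸ hn0]
      | succ k ih =>
        rcases Nat.lt_or_ge n (k+1) with h | h
        · exact hzero k (ih (Nat.lt_succ_iff.mp h))
        · have : n = k + 1 := le_antisymm hm h
          rw [← this]; exact hn0
    exact tendsto_atTop_of_eventually_const hconst

/-- Theorem 1.3 (ICU case, with uniqueness): if `(X,d,⪯)` has the ICU property,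
`T` is increasing, contractive for some `φ ∈ Φ` on comparable pairs, `x₀ ⪯ T x₀`
for some `x₀`, and every two points have a common upper bound, then `T` has a
unique fixed point. -/
theorem stmt_17 {X : Type*} [MetricSpace X] [CompleteSpace X] [PartialOrder X]
    (T : X → X)
    (hmono : ∀ x y : X, x ≤ y → T x ≤ T y)
    (hICU : ∀ (x : ℕ → X) (l : X), (∀ n : ℕ, x n ≤ x (n + 1)) →
      Tendsto x atTop (nhds l) → ∀ n : ℕ, x n ≤ l)
    (x₀ : X) (hx₀ : x₀ ≤ T x₀)
    (φ : ℝ → ℝ) (hφ0 : ∀ t : ℝ, 0 ≤ t → 0 ≤ φ t)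
    (hφ1 : ∀ t : ℝ, 0 < t → φ t < t)
    (hφ2 : ∀ t : ℝ, 0 < t → ∃ L : ℝ, L < t ∧ Tendsto φ (nhdsWithin t (Set.Ioi t)) (nhds L))
    (hcontr : ∀ x y : X, x ≤ y → dist (T x) (T y) ≤ φ (dist x y))
    (hub : ∀ x y : X, ∃ z : X, x ≤ z ∧ y ≤ z) :
    ∃! x : X, T x = x := by
  -- the orbit of x₀
  set x : ℕ → X := fun n => T^[n] x₀ with hxdef
  have hxsucc : ∀ n, x (n+1) = T (x n) := fun n => Function.iterate_succ_apply' T n x₀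
  have hstep : ∀ n, x n ≤ x (n+1) := by
    intro n
    induction n with
    | zero => simpa [hxdef] using hx₀
    | succ n ih => rw [hxsucc, hxsucc]; exact hmono _ _ ih
  have hmonoseq : Monotone x := monotone_nat_of_le_succ hstep
  -- consecutive distances go to zero
  set d : ℕ → ℝ := fun n => dist (x n) (x (n+1)) with hddef
  have hdrec : ∀ n, 0 < d n → d (n+1) ≤ φ (d n) := by
    intro n _
    have : d (n+1) = dist (T (x n)) (T (x (n+1))) := by
      simp only [hddef]; rw [hxsucc (n+1), hxsucc n]
    rw [this]
    exact hcontr _ _ (hstep n)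
  have hdzero : ∀ n, d n = 0 → d (n+1) = 0 := by
    intro n hn
    have hxe : x n = x (n+1) := by simpa [hddef, dist_eq_zero] using hn
    have h2 : x (n+2) = x (n+1) := by rw [hxsucc (n+1), ← hxe, ← hxsucc n]; exact hxe.symm
    simp only [hddef]
    rw [h2, dist_self]
  have hd0 : Tendsto d atTop (nhds 0) :=
    aux_tendsto_zero φ hφ1 hφ2 d (fun n => dist_nonneg) hdrec hdzero
  -- the orbit is Cauchy
  have hcauchy : CauchySeq x := by
    rw [Metric.cauchySeq_iff]
    by_contra hnc
    push_neg at hnc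
    obtain ⟨ε, hε, hnc⟩ := hnc
    obtain ⟨L, hL, hLt⟩ := hφ2 ε hε
    set B : ℝ := max L (φ ε) with hBdef
    have hB : B < ε := max_lt hL (hφ1 ε hε)
    set C : ℝ := (B + ε) / 2 with hCdef
    have hBC : B < C := by rw [hCdef]; linarith
    have hCε : C < ε := by rw [hCdef]; linarith
    -- get δ > 0 with φ t < C on [ε, ε+δ)
    have hev : ∀ᶠ t in nhdsWithin ε (Set.Ioi ε), φ t < C :=
      hLt.eventually_lt_const (lt_of_le_of_lt (le_max_left _ _) hBC)
    obtain ⟨δ, hδpos, hδ⟩ := Metric.mem_nhdsWithin_iff.mp hev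
    have hφC : ∀ t : ℝ, ε ≤ t → t < ε + δ → φ t < C := by
      intro t h1 h2
      rcases h1.lt_or_eq with h | h
      · apply hδ
        constructor
        · rw [Metric.mem_ball, Real.dist_eq, abs_of_nonneg (by linarith)]
          linarith
        · exact h
      · rw [← h]
        exact lt_of_le_of_lt (le_max_right L (φ ε)) hBC
    set δ' : ℝ := min δ ((ε - C) / 2) with hδ'def
    have hδ'pos : 0 < δ' := lt_min hδpos (by linarith)
    -- find N with d n < δ' for n ≥ N
    have : ∀ᶠ n in atTop, d n < δ' := hd0.eventually_lt_const hδ'pos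
    obtain ⟨N, hN⟩ := eventually_atTop.mp this
    obtain ⟨m₁, hm₁, n₁, hn₁, hdist⟩ := hnc N
    -- arrange a < b with ε ≤ dist (x a) (x b)
    obtain ⟨a, b, ha, hab, hdab⟩ : ∃ a b : ℕ, N ≤ a ∧ a < b ∧ ε ≤ dist (x a) (x b) := by
      rcases lt_trichotomy m₁ n₁ with h | h | h
      · exact ⟨m₁, n₁, hm₁, h, hdist⟩
      · exfalso; rw [h] at hdist; simp at hdist; linarith
      · exact ⟨n₁, m₁, hn₁, h, by rwa [dist_comm]⟩
    -- choose the minimal m > a with ε ≤ dist (x a) (x m)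
    have hPex : ∃ k : ℕ, ε ≤ dist (x a) (x (a + 1 + k)) := by
      refine ⟨b - a - 1, ?_⟩
      have : a + 1 + (b - a - 1) = b := by omega
      rwa [this]
    set k₀ := Nat.find hPex with hk₀def
    have hPk₀ : ε ≤ dist (x a) (x (a + 1 + k₀)) := Nat.find_spec hPex
    set m := a + 1 + k₀ with hmdef
    have hmin : ∀ j, a ≤ j → j < m → dist (x a) (x j) < ε := by
      intro j hj1 hj2
      rcases hj1.lt_or_eq with h | h
      · have : j = a + 1 + (j - a - 1) := by omega
        rw [this]
        have hlt : j - a - 1 < k₀ := by omega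
        have := Nat.find_min hPex hlt
        push_neg at this
        exact this
      · rw [← h]; simpa using hε
    -- m - 1 trick: use m = a + 1 + k₀, so predecessor is a + k₀
    have hpred : dist (x a) (x (a + k₀)) < ε := hmin _ (by omega) (by omega)
    have hdm' : d (a + k₀) < δ' := hN _ (by omega)
    have hda : d a < δ' := hN _ ha
    have hdm : d m < δ' := hN _ (by omega)
    have hδ'δ : δ' ≤ δ := min_le_left _ _
    have hδ'C : δ' ≤ (ε - C) / 2 := min_le_right _ _
    have htub : dist (x a) (x m) < ε + δ := by
      have h1 : dist (x a) (x m) ≤ dist (x a) (x (a + k₀)) + dist (x (a + k₀)) (x (a + k₀ + 1)) := by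
        have : m = a + k₀ + 1 := by omega
        rw [this]
        exact dist_triangle _ _ _
      have h2 : dist (x (a + k₀)) (x (a + k₀ + 1)) = d (a + k₀) := rfl
      linarith
    have hφt : φ (dist (x a) (x m)) < C := hφC _ hPk₀ htub
    have hTcontr : dist (x (a + 1)) (x (m + 1)) ≤ φ (dist (x a) (x m)) := by
      rw [hxsucc a, hxsucc m]
      exact hcontr _ _ (hmonoseq (by omega))
    have hfinal : dist (x a) (x m) ≤ d a + dist (x (a+1)) (x (m+1)) + d m := by
      have t1 := dist_triangle (x a) (x (a+1)) (x m)
      have t2 := dist_triangle (x (a+1)) (x (m+1)) (x m)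
      have t3 : dist (x (m+1)) (x m) = d m := by rw [dist_comm]
      have t4 : dist (x a) (x (a+1)) = d a := rfl
      linarith
    have : dist (x a) (x m) < δ' + C + δ' := by linarith
    linarith
  -- get the limit
  obtain ⟨l, hconv⟩ := cauchySeq_tendsto_of_complete hcauchy
  have hle : ∀ n, x n ≤ l := hICU x l hstep hconv
  have hdl : Tendsto (fun n => dist (x n) l) atTop (nhds 0) := by
    have := hconv.dist (tendsto_const_nhds (x := l) (f := atTop))
    simpa using this
  have hfix : T l = l := by
    have key : ∀ n, dist (T l) l ≤ dist (x n) l + dist (x (n+1)) l := by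
      intro n
      rcases eq_or_lt_of_le (dist_nonneg (x := x n) (y := l)) with h | h
      · have hxe : x n = l := dist_eq_zero.mp h.symm
        have : T l = x (n+1) := by rw [← hxe, ← hxsucc]
        rw [this]
        have := dist_nonneg (x := x n) (y := l)
        linarith
      · have h1 : dist (T l) l ≤ dist (T (x n)) (T l) + dist (T (x n)) l := by
          have := dist_triangle (T l) (T (x n)) l
          rw [dist_comm (T l) (T (x n))] at this
          exact this
        have h2 : dist (T (x n)) (T l) ≤ φ (dist (x n) l) := hcontr _ _ (hle n)
        have h3 : φ (dist (x n) l) < dist (x n) l := hφ1 _ h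
        have h4 : dist (T (x n)) l = dist (x (n+1)) l := by rw [hxsucc]
        linarith
    have hrhs : Tendsto (fun n => dist (x n) l + dist (x (n+1)) l) atTop (nhds 0) := by
      have h2 : Tendsto (fun n => dist (x (n+1)) l) atTop (nhds 0) :=
        hdl.comp (tendsto_add_atTop_nat 1)
      simpa using hdl.add h2
    have : dist (T l) l ≤ 0 :=
      le_of_tendsto_of_tendsto' tendsto_const_nhds hrhs key
    have := le_antisymm this dist_nonneg
    exact dist_eq_zero.mp this
  refine ⟨l, hfix, ?_⟩
  -- uniqueness
  intro y hy
  obtain ⟨z, hyz, hlz⟩ := hub y l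
  set w : ℕ → X := fun n => T^[n] z with hwdef
  have hwsucc : ∀ n, w (n+1) = T (w n) := fun n => Function.iterate_succ_apply' T n z
  have key : ∀ (p : X), T p = p → p ≤ z → Tendsto w atTop (nhds p) := by
    intro p hp hpz
    have hple : ∀ n, p ≤ w n := by
      intro n
      induction n with
      | zero => simpa [hwdef] using hpz
      | succ n ih =>
        rw [hwsucc, ← hp]
        exact hmono _ _ ih
    set e : ℕ → ℝ := fun n => dist p (w n) with hedef
    have herec : ∀ n, 0 < e n → e (n+1) ≤ φ (e n) := by
      intro n _
      have : e (n+1) = dist (T p) (T (w n)) := by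
        simp only [hedef]; rw [hwsucc, hp]
      rw [this]
      exact hcontr _ _ (hple n)
    have hezero : ∀ n, e n = 0 → e (n+1) = 0 := by
      intro n hn
      have hxe : p = w n := dist_eq_zero.mp hn
      simp only [hedef, dist_eq_zero]
      rw [hwsucc, ← hxe, hp]
    have he0 : Tendsto e atTop (nhds 0) :=
      aux_tendsto_zero φ hφ1 hφ2 e (fun n => dist_nonneg) herec hezero
    rw [tendsto_iff_dist_tendsto_zero]
    simpa [hedef, dist_comm] using he0
  exact tendsto_nhds_unique (key y hy hyz) (key l hfix hlz)
end

section
/- Let (X,d) be a complete metric space, T : X → X, and M ⊆ X × X a subset such that M is T-closed and transitive, T is continuous, there exists x₀ ∈ X with (x₀, Tx₀) ∈ M, and there exists φ ∈ Φ with d(Tx,Ty) ≤ φ(d(x,y)) for all (x,y) ∈ M. Then T has at least one fixed point. -/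
open Filter

/-- Theorem 1.6 (continuity case): fixed point theorem for `φ ∈ Φ` contractions with
respect to a `T`-closed transitive subset `M ⊆ X × X` in a complete metric space. -/
theorem stmt_18 {X : Type*} [MetricSpace X] [CompleteSpace X]
    (T : X → X) (M : Set (X × X))
    (hTclosed : ∀ x y : X, (x, y) ∈ M → (T x, T y) ∈ M)
    (htrans : ∀ x y z : X, (x, y) ∈ M → (y, z) ∈ M → (x, z) ∈ M)
    (hcont : Continuous T)
    (x₀ : X) (hx₀ : (x₀, T x₀) ∈ M)
    (φ : ℝ → ℝ) (hφ0 : ∀ t : ℝ, 0 ≤ t → 0 ≤ φ t)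
    (hφ1 : ∀ t : ℝ, 0 < t → φ t < t)
    (hφ2 : ∀ t : ℝ, 0 < t → ∃ L : ℝ, L < t ∧ Tendsto φ (nhdsWithin t (Set.Ioi t)) (nhds L))
    (hcontr : ∀ x y : X, (x, y) ∈ M → dist (T x) (T y) ≤ φ (dist x y)) :
    ∃ x : X, T x = x := by
  classical
  set x : ℕ → X := fun n => T^[n] x₀ with hxdef
  have hstep : ∀ n, x (n + 1) = T (x n) := fun n => Function.iterate_succ_apply' T n x₀
  -- consecutive pairs lie in M
  have hM1 : ∀ n, (x n, x (n + 1)) ∈ M := by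
    intro n
    induction n with
    | zero => simpa [x] using hx₀
    | succ k ih =>
        have h := hTclosed _ _ ih
        rwa [← hstep k, ← hstep (k + 1)] at h
  -- all pairs (x n, x m) with n < m lie in M
  have hMlt : ∀ n m, n < m → (x n, x m) ∈ M := by
    intro n m
    induction m with
    | zero => omega
    | succ k ih =>
        intro h
        rcases Nat.lt_succ_iff_lt_or_eq.mp h with h' | h'
        · exact htrans _ _ _ (ih h') (hM1 k)
        · subst h'; exact hM1 n
  -- key consequence of hφ2/hφ1
  have hkey : ∀ ε : ℝ, 0 < ε → ∃ δ > (0:ℝ), ∃ c, c < ε ∧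
      ∀ t, ε ≤ t → t < ε + δ → φ t ≤ c := by
    intro ε hε
    obtain ⟨L, hL, htend⟩ := hφ2 ε hε
    have hev : ∀ᶠ t in nhdsWithin ε (Set.Ioi ε), φ t < (L + ε) / 2 :=
      htend.eventually (Filter.Tendsto.eventually_lt_const (by linarith) tendsto_id)
    obtain ⟨δ, hδ, hδ'⟩ := Metric.mem_nhdsWithin_iff.mp hev
    refine ⟨δ, hδ, max (φ ε) ((L + ε) / 2), ?_, ?_⟩
    · exact max_lt (hφ1 ε hε) (by linarith)
    · intro t ht1 ht2
      rcases eq_or_lt_of_le ht1 with h | h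
      · exact h ▸ le_max_left _ _
      · have hball : t ∈ Metric.ball ε δ := by
          rw [Metric.mem_ball, Real.dist_eq, abs_of_nonneg (by linarith)]; linarith
        exact le_trans (le_of_lt (hδ' ⟨hball, h⟩)) (le_max_right _ _)
  -- If two consecutive iterates coincide, we are done
  by_cases h0 : ∃ n, dist (x n) (x (n + 1)) = 0
  · obtain ⟨n, hn⟩ := h0
    refine ⟨x n, ?_⟩
    rw [dist_eq_zero] at hn
    rw [← hstep n]
    exact hn.symm
  push_neg at h0
  have hpos : ∀ n, 0 < dist (x n) (x (n + 1)) :=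
    fun n => lt_of_le_of_ne dist_nonneg (Ne.symm (h0 n))
  -- distances strictly decrease
  have hdec : ∀ n, dist (x (n + 1)) (x (n + 2)) < dist (x n) (x (n + 1)) := by
    intro n
    have h1 := hcontr _ _ (hM1 n)
    rw [← hstep n, ← hstep (n + 1)] at h1
    exact lt_of_le_of_lt h1 (hφ1 _ (hpos n))
  have hanti : Antitone (fun n => dist (x n) (x (n + 1))) :=
    antitone_nat_of_succ_le fun n => (hdec n).le
  have hbdd : BddBelow (Set.range fun n => dist (x n) (x (n + 1))) :=
    ⟨0, by rintro _ ⟨n, rfl⟩; exact dist_nonneg⟩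
  set D : ℝ := ⨅ n, dist (x n) (x (n + 1)) with hD
  have hDtend : Tendsto (fun n => dist (x n) (x (n + 1))) atTop (nhds D) :=
    tendsto_atTop_ciInf hanti hbdd
  have hDnonneg : 0 ≤ D := le_ciInf fun n => dist_nonneg
  have hDle : ∀ n, D ≤ dist (x n) (x (n + 1)) := fun n => ciInf_le hbdd n
  have hDgt : ∀ n, D < dist (x n) (x (n + 1)) :=
    fun n => lt_of_le_of_lt (hDle (n + 1)) (hdec n)
  -- D = 0
  have hD0 : D = 0 := by
    by_contra hne
    have hDpos : 0 < D := lt_of_le_of_ne hDnonneg (Ne.symm hne)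
    obtain ⟨L, hL, htend⟩ := hφ2 D hDpos
    have hwithin : Tendsto (fun n => dist (x n) (x (n + 1))) atTop
        (nhdsWithin D (Set.Ioi D)) := by
      rw [tendsto_nhdsWithin_iff]
      exact ⟨hDtend, Eventually.of_forall fun n => hDgt n⟩
    have hev : ∀ᶠ n in atTop, φ (dist (x n) (x (n + 1))) < (L + D) / 2 :=
      (htend.comp hwithin).eventually
        (Filter.Tendsto.eventually_lt_const (by linarith) tendsto_id)
    obtain ⟨n, hn⟩ := hev.exists
    have h1 := hcontr _ _ (hM1 n)
    rw [← hstep n, ← hstep (n + 1)] at h1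
    have := hDle (n + 1)
    linarith
  -- the sequence is Cauchy
  have hcauchy : CauchySeq x := by
    rw [Metric.cauchySeq_iff']
    intro ε hε
    obtain ⟨δ, hδ, c, hc, hφc⟩ := hkey (ε / 2) (by linarith)
    set δ' : ℝ := min δ (ε / 2) with hδ'def
    have hδ'pos : 0 < δ' := lt_min hδ (by linarith)
    have hcnonneg : 0 ≤ c := le_trans (hφ0 (ε / 2) (by linarith)) (hφc (ε / 2) le_rfl (by linarith))
    -- choose N with small consecutive distances
    have htend0 : Tendsto (fun n => dist (x n) (x (n + 1))) atTop (nhds 0) := hD0 ▸ hDtend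
    have hsm : ∀ᶠ n in atTop, dist (x n) (x (n + 1)) < min δ' (ε / 2 - c) :=
      Filter.Tendsto.eventually_lt_const (lt_min hδ'pos (by linarith)) htend0
    obtain ⟨N, hN⟩ := eventually_atTop.mp hsm
    refine ⟨N, fun n hn => ?_⟩
    have hmain : ∀ m, N ≤ m → dist (x N) (x m) < ε / 2 + δ' := by
      intro m hm
      induction m, hm using Nat.le_induction with
      | base => simpa using (by linarith : (0:ℝ) < ε / 2 + δ')
      | succ m hm ih =>
          by_cases hcase : dist (x N) (x m) < ε / 2
          · calc dist (x N) (x (m + 1)) ≤ dist (x N) (x m) + dist (x m) (x (m + 1)) :=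
                  dist_triangle _ _ _
              _ < ε / 2 + δ' := by
                  have := lt_of_lt_of_le (hN m hm) (min_le_left _ _)
                  linarith
          · push_neg at hcase
            have hNm : N < m := by
              rcases eq_or_lt_of_le hm with h | h
              · exfalso; rw [← h] at hcase; simp at hcase; linarith
              · exact h
            have hMm : (x N, x m) ∈ M := hMlt N m hNm
            have h1 := hcontr _ _ hMm
            rw [← hstep N, ← hstep m] at h1
            have h2 : φ (dist (x N) (x m)) ≤ c := by
              apply hφc _ hcase
              have : δ' ≤ δ := min_le_left _ _
              linarith
            have h3 : dist (x N) (x (N + 1)) < ε / 2 - c :=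
              lt_of_lt_of_le (hN N le_rfl) (min_le_right _ _)
            calc dist (x N) (x (m + 1))
                ≤ dist (x N) (x (N + 1)) + dist (x (N + 1)) (x (m + 1)) :=
                  dist_triangle _ _ _
              _ < (ε / 2 - c) + c := by linarith
              _ = ε / 2 := by ring
              _ < ε / 2 + δ' := by linarith
    have hδ'le : δ' ≤ ε / 2 := min_le_right _ _
    have := hmain n hn
    rw [dist_comm]
    linarith
  -- get the limit and conclude by continuity
  obtain ⟨z, hz⟩ := cauchySeq_tendsto_of_complete hcauchy
  refine ⟨z, ?_⟩
  have h1 : Tendsto (fun n => x (n + 1)) atTop (nhds z) :=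
    hz.comp (tendsto_add_atTop_nat 1)
  have h2 : Tendsto (fun n => T (x n)) atTop (nhds (T z)) :=
    (hcont.tendsto z).comp hz
  have h3 : (fun n => x (n + 1)) = fun n => T (x n) := funext hstep
  exact tendsto_nhds_unique h2 (h3 ▸ h1)
end

section
/- Let (X,d) be a metric space, R a binary relation on X, and T : X → X such that: (a) (X,d) is R-complete, (b) R is T-closed, (c) either T is R-continuous or R is d-self-closed, (d) there exists x₀ ∈ X with (x₀, Tx₀) ∈ R, (e) there exists α ∈ [0,1) with d(Tx,Ty) ≤ α·d(x,y) for all (x,y) ∈ R. Then T has a fixed point; moreover, if X is R^s-connected then the fixed point is unique. -/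
open Filter

variable {X : Type*}

/-- Theorem 2.14: relation-theoretic Banach contraction principle, with uniqueness under
`R^s`-connectedness of `X`. -/
theorem stmt_19 [MetricSpace X] (R : Set (X × X)) (T : X → X)
    (hcomp : ∀ x : ℕ → X, RPreserving R x → CauchySeq x → ∃ l : X, Tendsto x atTop (nhds l))
    (hTclosed : ∀ x y : X, (x, y) ∈ R → (T x, T y) ∈ R)
    (hcont : (∀ (x : ℕ → X) (l : X), RPreserving R x → Tendsto x atTop (nhds l) →
      Tendsto (fun n => T (x n)) atTop (nhds (T l))) ∨ DSelfClosed R)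
    (x₀ : X) (hx₀ : (x₀, T x₀) ∈ R)
    (α : ℝ) (hα0 : 0 ≤ α) (hα1 : α < 1)
    (hcontr : ∀ x y : X, (x, y) ∈ R → dist (T x) (T y) ≤ α * dist x y) :
    (∃ x : X, T x = x) ∧
    (RsConnected R (Set.univ : Set X) → ∃! x : X, T x = x) := by
  set x : ℕ → X := fun n => T^[n] x₀ with hxdef
  have hsucc : ∀ n, x (n + 1) = T (x n) := by
    intro n; simp [hxdef, Function.iterate_succ_apply']
  have hR : RPreserving R x := by
    intro n
    induction n with
    | zero => simpa [hxdef] using hx₀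
    | succ n ih => rw [hsucc, hsucc]; exact hTclosed _ _ ih
  have hd : ∀ n, dist (x n) (x (n + 1)) ≤ dist x₀ (T x₀) * α ^ n := by
    intro n
    induction n with
    | zero => simp [hxdef]
    | succ n ih =>
      rw [hsucc, hsucc]
      calc dist (T (x n)) (T (x (n + 1))) ≤ α * dist (x n) (x (n + 1)) :=
            hcontr _ _ (hR n)
        _ ≤ α * (dist x₀ (T x₀) * α ^ n) := by
            exact mul_le_mul_of_nonneg_left ih hα0
        _ = dist x₀ (T x₀) * α ^ (n + 1) := by ring
  have hcauchy : CauchySeq x := cauchySeq_of_le_geometric α _ hα1 hd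
  obtain ⟨l, hl⟩ := hcomp x hR hcauchy
  have hfix : T l = l := by
    rcases hcont with hc | hsc
    · have h1 : Tendsto (fun n => T (x n)) atTop (nhds (T l)) := hc x l hR hl
      have h2 : Tendsto (fun n => x (n + 1)) atTop (nhds l) :=
        hl.comp (tendsto_add_atTop_nat 1)
      have h3 : (fun n => x (n + 1)) = fun n => T (x n) := funext hsucc
      exact tendsto_nhds_unique h1 (h3 ▸ h2)
    · obtain ⟨k, hk, hrel⟩ := hsc x l hR hl
      have hdk : ∀ i, dist (x (k i + 1)) (T l) ≤ α * dist (x (k i)) l := by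
        intro i
        rw [hsucc]
        rcases hrel i with h | h
        · exact hcontr _ _ h
        · rw [dist_comm, dist_comm (x (k i)) l]
          exact hcontr _ _ h
      have hxk : Tendsto (fun i => x (k i)) atTop (nhds l) :=
        hl.comp hk.tendsto_atTop
      have hxk1 : Tendsto (fun i => x (k i + 1)) atTop (nhds l) := by
        have : Tendsto (fun i => k i + 1) atTop atTop :=
          (tendsto_add_atTop_nat 1).comp hk.tendsto_atTop
        exact hl.comp this
      have hdist0 : Tendsto (fun i => dist (x (k i + 1)) (T l)) atTop (nhds 0) := by
        have hub : Tendsto (fun i => α * dist (x (k i)) l) atTop (nhds 0) := by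
          have := (tendsto_iff_dist_tendsto_zero.mp hxk).const_mul α
          simpa using this
        refine squeeze_zero (fun i => dist_nonneg) hdk hub
      have : Tendsto (fun i => x (k i + 1)) atTop (nhds (T l)) :=
        tendsto_iff_dist_tendsto_zero.mpr hdist0
      exact tendsto_nhds_unique this hxk1
  refine ⟨⟨l, hfix⟩, ?_⟩
  intro hconn
  refine ⟨l, hfix, ?_⟩
  intro y hy
  -- key: for related pairs, iterates contract
  have key : ∀ a b : X, ((a, b) ∈ R ∨ (b, a) ∈ R) → ∀ n : ℕ,
      dist (T^[n] a) (T^[n] b) ≤ α ^ n * dist a b := by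
    intro a b hab n
    induction n with
    | zero => simp
    | succ n ih =>
      have hrel : ∀ m : ℕ, (T^[m] a, T^[m] b) ∈ R ∨ (T^[m] b, T^[m] a) ∈ R := by
        intro m
        induction m with
        | zero => simpa using hab
        | succ m ihm =>
          rw [Function.iterate_succ_apply', Function.iterate_succ_apply']
          rcases ihm with h | h
          · exact Or.inl (hTclosed _ _ h)
          · exact Or.inr (hTclosed _ _ h)
      rw [Function.iterate_succ_apply', Function.iterate_succ_apply']
      have hstep : dist (T (T^[n] a)) (T (T^[n] b)) ≤ α * dist (T^[n] a) (T^[n] b) := by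
        rcases hrel n with h | h
        · exact hcontr _ _ h
        · rw [dist_comm, dist_comm (T^[n] a)]
          exact hcontr _ _ h
      calc dist (T (T^[n] a)) (T (T^[n] b)) ≤ α * dist (T^[n] a) (T^[n] b) := hstep
        _ ≤ α * (α ^ n * dist a b) := mul_le_mul_of_nonneg_left ih hα0
        _ = α ^ (n + 1) * dist a b := by ring
  obtain ⟨m, z, hz0, hzm, hzrel⟩ := hconn y (Set.mem_univ y) l (Set.mem_univ l)
  set S : ℝ := ∑ i ∈ Finset.range m, dist (z i) (z (i + 1)) with hS
  have hbound : ∀ n : ℕ, dist y l ≤ α ^ n * S := by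
    intro n
    have hy' : T^[n] y = y := Function.iterate_fixed hy n
    have hl' : T^[n] l = l := Function.iterate_fixed hfix n
    calc dist y l = dist (T^[n] (z 0)) (T^[n] (z m)) := by rw [hz0, hzm, hy', hl']
      _ ≤ ∑ i ∈ Finset.range m, dist (T^[n] (z i)) (T^[n] (z (i + 1))) :=
          dist_le_range_sum_dist (fun i => T^[n] (z i)) m
      _ ≤ ∑ i ∈ Finset.range m, α ^ n * dist (z i) (z (i + 1)) := by
          refine Finset.sum_le_sum ?_
          intro i hi
          exact key _ _ (hzrel i (Finset.mem_range.mp hi)) n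
      _ = α ^ n * S := by rw [hS, Finset.mul_sum]
  have htend : Tendsto (fun n : ℕ => α ^ n * S) atTop (nhds 0) := by
    have := (tendsto_pow_atTop_nhds_zero_of_lt_one hα0 hα1).mul_const S
    simpa using this
  have hle : dist y l ≤ 0 := ge_of_tendsto' htend hbound
  exact dist_eq_zero.mp (le_antisymm hle dist_nonneg)
end
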